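/- Let λ_1 ≤ ⋯ ≤ λ_n be real numbers, let 1 ≤ N < n with λ_N < λ_{N+1}, and let μ : (0,∞) → ℝ be a function such that Σ_{i=1}^n (1 + exp(β(λ_i − μ(β))))⁻¹ = N for every β > 0. Then μ(β) → (λ_N + λ_{N+1})/2 as β → ∞. -/

import Mathlib

/-!
Write `f x = (1 + exp x)⁻¹`, so that the constraint says that the occupation
`∑ i, f (β (λ_i - μ))` equals `N`, and the occupation is monotone in `μ`. Let `s` be the `N`
lowest states. For `λ_N ≤ c < (λ_N + λ_{N+1})/2`, the occupation at `c` is at most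
`N - exp (-β (c - λ_N)) / 2 + n exp (-β (λ_{N+1} - c))`: the top occupied state is depleted
by more than the unoccupied states gain. This is `< N` for large `β`, so `μ(β) > c`.
The upper bound follows from the particle-hole symmetry `f x + f (-x) = 1`, which turns
`(λ, μ, N)` into `(-λ, -μ, n - N)`.
-/

open Filter Finset

noncomputable def fermiDirac (x : ℝ) : ℝ := (1 + Real.exp x)⁻¹

namespace fermiDirac

theorem le_one (x : ℝ) : fermiDirac x ≤ 1 :=
  inv_le_one_of_one_le₀ (le_add_of_nonneg_right (Real.exp_pos x).le)

theorem le_exp_neg (x : ℝ) : fermiDirac x ≤ Real.exp (-x) := by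
  rw [Real.exp_neg]
  exact inv_anti₀ (Real.exp_pos x) (le_add_of_nonneg_left zero_le_one)

theorem exp_neg_div_two_le {x : ℝ} (hx : 0 ≤ x) : Real.exp (-x) / 2 ≤ fermiDirac x := by
  have h : Real.exp (-x) / 2 = (2 * Real.exp x)⁻¹ := by rw [Real.exp_neg]; ring
  rw [h]
  exact inv_anti₀ (by positivity) (by linarith [Real.one_le_exp hx])

theorem add_neg (x : ℝ) : fermiDirac x + fermiDirac (-x) = 1 := by
  have h := Real.exp_pos x
  simp only [fermiDirac, Real.exp_neg]
  field_simp
  ring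

theorem neg_le {x : ℝ} (hx : 0 ≤ x) : fermiDirac (-x) ≤ 1 - Real.exp (-x) / 2 := by
  linarith [add_neg x, exp_neg_div_two_le hx]

theorem antitone : Antitone fermiDirac := fun _ _ h =>
  inv_anti₀ (by positivity) (add_le_add_right (Real.exp_le_exp.2 h) 1)

end fermiDirac

theorem eventually_mul_exp_neg_lt (K : ℝ) {t u : ℝ} (htu : t < u) :
    ∀ᶠ β in atTop, K * Real.exp (-(β * u)) < Real.exp (-(β * t)) / 2 := by
  have hlim : Tendsto (fun β => 2 * K * Real.exp (-(β * (u - t)))) atTop (nhds 0) := by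
    simpa using (Real.tendsto_exp_neg_atTop_nhds_zero.comp
      (tendsto_id.atTop_mul_const (sub_pos.2 htu))).const_mul (2 * K)
  filter_upwards [hlim.eventually_lt_const one_pos] with β hβ
  have hsplit : K * Real.exp (-(β * u))
      = 2 * K * Real.exp (-(β * (u - t))) * (Real.exp (-(β * t)) / 2) := by
    rw [mul_assoc, mul_div_assoc', mul_assoc, ← Real.exp_add]; ring_nf
  rw [hsplit]
  exact mul_lt_of_lt_one_left (by positivity) hβ

section Occupation

variable {ι : Type*} [Fintype ι] (lam : ι → ℝ)

noncomputable def occupation (β c : ℝ) : ℝ := ∑ i, fermiDirac (β * (lam i - c))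

theorem occupation_monotone {β : ℝ} (hβ : 0 ≤ β) : Monotone (occupation lam β) :=
  fun _ _ h => sum_le_sum fun _ _ =>
    fermiDirac.antitone (mul_le_mul_of_nonneg_left (by linarith) hβ)

theorem occupation_neg (β c : ℝ) :
    occupation (-lam) β (-c) = Fintype.card ι - occupation lam β c := by
  have h : ∀ i, fermiDirac (β * ((-lam) i - -c)) = 1 - fermiDirac (β * (lam i - c)) := by
    intro i
    rw [← fermiDirac.add_neg (β * (lam i - c)), add_sub_cancel_left, Pi.neg_apply]
    ring_nf
  simp only [occupation, h, sum_sub_distrib, sum_const, card_univ, nsmul_eq_mul, mul_one]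

variable {lam} [DecidableEq ι]

theorem eventually_occupation_lt_card {s : Finset ι} {j : ι} (hj : j ∈ s) {b c : ℝ}
    (hsc : ∀ i ∉ s, b ≤ lam i) (hjc : lam j ≤ c) (hcb : c - lam j < b - c) :
    ∀ᶠ β in atTop, occupation lam β c < #s := by
  filter_upwards [eventually_gt_atTop 0,
    eventually_mul_exp_neg_lt (#sᶜ : ℝ) hcb] with β hβ hsmall
  have hin : ∑ i ∈ s, fermiDirac (β * (lam i - c)) ≤ #s - Real.exp (-(β * (c - lam j))) / 2 := by
    have hrest := sum_le_card_nsmul (s.erase j) (fun i => fermiDirac (β * (lam i - c))) 1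
      fun i _ => fermiDirac.le_one _
    have htop : fermiDirac (β * (lam j - c)) ≤ 1 - Real.exp (-(β * (c - lam j))) / 2 := by
      rw [show β * (lam j - c) = -(β * (c - lam j)) by ring]
      exact fermiDirac.neg_le (mul_nonneg hβ.le (by linarith))
    rw [← add_sum_erase s _ hj]
    rw [card_erase_of_mem hj, nsmul_eq_mul, mul_one, Nat.cast_sub (card_pos.2 ⟨j, hj⟩)] at hrest
    push_cast at hrest
    linarith
  have hout : ∑ i ∈ sᶜ, fermiDirac (β * (lam i - c)) ≤ #sᶜ * Real.exp (-(β * (b - c))) := by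
    rw [← nsmul_eq_mul]
    refine sum_le_card_nsmul _ _ _ fun i hi => (fermiDirac.le_exp_neg _).trans ?_
    have hbi := hsc i (mem_compl.1 hi)
    exact Real.exp_le_exp.2 (neg_le_neg (mul_le_mul_of_nonneg_left (by linarith) hβ.le))
  rw [occupation, ← sum_add_sum_compl s]
  linarith

variable {μ : ℝ → ℝ}

theorem eventually_gt_of_occupation_eq_card {s : Finset ι} {j : ι} (hj : j ∈ s) {b : ℝ}
    (hsc : ∀ i ∉ s, b ≤ lam i) (hjb : lam j < b)
    (hμ : ∀ β, 0 < β → occupation lam β (μ β) = #s) {c : ℝ} (hc : c < (lam j + b) / 2) :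
    ∀ᶠ β in atTop, c < μ β := by
  have hc' : max c (lam j) < (lam j + b) / 2 := max_lt hc (by linarith)
  filter_upwards [eventually_gt_atTop 0, eventually_occupation_lt_card hj hsc
    (le_max_right c (lam j)) (by linarith)] with β hβ hocc
  exact (le_max_left _ _).trans_lt
    ((occupation_monotone lam hβ.le).reflect_lt (hocc.trans_eq (hμ β hβ).symm))

theorem eventually_lt_of_occupation_eq_card {s : Finset ι} {k : ι} (hk : k ∉ s) {a : ℝ}
    (hs : ∀ i ∈ s, lam i ≤ a) (hak : a < lam k)
    (hμ : ∀ β, 0 < β → occupation lam β (μ β) = #s) {c : ℝ} (hc : (a + lam k) / 2 < c) :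
    ∀ᶠ β in atTop, μ β < c := by
  have hμneg : ∀ β, 0 < β → occupation (-lam) β (-μ β) = #sᶜ := fun β hβ => by
    rw [occupation_neg, hμ β hβ, card_compl, Nat.cast_sub (card_le_univ s)]
  have hsc : ∀ i ∉ sᶜ, -a ≤ (-lam) i := fun i hi =>
    neg_le_neg (hs i (by simpa using hi))
  filter_upwards [eventually_gt_of_occupation_eq_card (mem_compl.2 hk) hsc (neg_lt_neg hak)
    hμneg (c := -c) (by simp only [Pi.neg_apply]; linarith)] with β hβ
  exact neg_lt_neg_iff.1 hβ

end Occupation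

/-- Zero-temperature limit of the chemical potential: if
`λ_1 ≤ ⋯ ≤ λ_n`, `1 ≤ N < n` with a spectral gap `λ_N < λ_{N+1}`, and
`μ(β)` satisfies `∑_i (1 + e^{β(λ_i − μ(β))})⁻¹ = N` for all `β > 0`, then
`μ(β) → (λ_N + λ_{N+1})/2` as `β → ∞`. -/
theorem stmt19 {n N : ℕ} (hN1 : 1 ≤ N) (hNn : N < n)
    (lam : Fin n → ℝ) (hmono : Monotone lam)
    (hgap : lam ⟨N - 1, by omega⟩ < lam ⟨N, hNn⟩)
    (μ : ℝ → ℝ)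
    (hμ : ∀ β : ℝ, 0 < β → ∑ i, (1 + Real.exp (β * (lam i - μ β)))⁻¹ = (N : ℝ)) :
    Tendsto μ atTop (nhds ((lam ⟨N - 1, by omega⟩ + lam ⟨N, hNn⟩) / 2)) := by
  set s := Iio (⟨N, hNn⟩ : Fin n)
  have hocc : ∀ β, 0 < β → occupation lam β (μ β) = #s := fun β hβ => by
    rw [Fin.card_Iio]; exact hμ β hβ
  have hj : (⟨N - 1, by omega⟩ : Fin n) ∈ s := by simp only [s, mem_Iio, Fin.mk_lt_mk]; omega
  have hk : (⟨N, hNn⟩ : Fin n) ∉ s := by simp [s]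
  have hs : ∀ i ∈ s, lam i ≤ lam ⟨N - 1, by omega⟩ := fun i hi => hmono <| by
    rw [mem_Iio, Fin.lt_def] at hi; rw [Fin.le_def]; simp only at hi ⊢; omega
  have hsc : ∀ i ∉ s, lam ⟨N, hNn⟩ ≤ lam i := fun i hi => hmono (by simpa [s] using hi)
  exact tendsto_order.2
    ⟨fun c hc => eventually_gt_of_occupation_eq_card hj hsc hgap hocc hc,
     fun c hc => eventually_lt_of_occupation_eq_card hk hs hgap hocc hc⟩
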